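/- arXiv:1703.00755 — 3 statements merged into one kernel-verified Lean document; each statement's English description precedes it below -/
import Mathlib

section
/- Let f be a Morse polynomial in ℝ[x₁,…,xₙ]. Then the gradient ideal I_grad(f) = ⟨∂f/∂x₁, …, ∂f/∂xₙ⟩ in ℝ[x₁,…,xₙ] is a radical ideal. -/
open MvPolynomial

/-- `f ∈ ℝ[x₁,…,xₙ]` viewed as a complex polynomial via the inclusion `ℝ ⊆ ℂ`. -/
noncomputable def complexify {n : ℕ} (f : MvPolynomial (Fin n) ℝ) : MvPolynomial (Fin n) ℂ :=
  MvPolynomial.map (algebraMap ℝ ℂ) f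

/-- `p ∈ ℂⁿ` is a (complex) critical point of `f ∈ ℝ[x₁,…,xₙ]`. -/
def IsComplexCriticalPoint {n : ℕ} (f : MvPolynomial (Fin n) ℝ) (p : Fin n → ℂ) : Prop :=
  ∀ i, eval p (pderiv i (complexify f)) = 0

/-- The Hessian matrix of `f` at `p ∈ ℂⁿ`. -/
noncomputable def complexHessian {n : ℕ} (f : MvPolynomial (Fin n) ℝ) (p : Fin n → ℂ) :
    Matrix (Fin n) (Fin n) ℂ :=
  Matrix.of fun i j => eval p (pderiv i (pderiv j (complexify f)))

/-- `f` is a Morse polynomial: all complex critical points are non-degenerate and the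
critical values at distinct critical points are distinct. -/
def IsMorse {n : ℕ} (f : MvPolynomial (Fin n) ℝ) : Prop :=
  (∀ p, IsComplexCriticalPoint f p → (complexHessian f p).det ≠ 0) ∧
  (∀ p q, IsComplexCriticalPoint f p → IsComplexCriticalPoint f q → p ≠ q →
    eval p (complexify f) ≠ eval q (complexify f))

/-!
Over `ℂ`, Taylor expansion at a critical point `p` gives `∇f ≡ H(p) (x - p)` modulo `𝔪ₚ²`, so when
the Hessian `H(p)` is invertible, every maximal ideal `𝔪ₚ` containing `I = ⟨∇f⟩` satisfies
`𝔪ₚ ⊆ I + 𝔪ₚ²`. By Nakayama's lemma some `r ≡ 1 mod 𝔪ₚ` then multiplies `𝔪ₚ` into `I`. If some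
`x ∈ √I` were not in `I`, take `𝔪ₚ` maximal over the colon ideal `(I : x)`: then `x ∈ 𝔪ₚ`, so
`r ∈ (I : x) ⊆ 𝔪ₚ`, contradicting `r ≡ 1`. Finally `ℂ[x]` is faithfully flat over `ℝ[x]`, so the
real gradient ideal is the contraction of the complex one and is radical as well.
-/

universe u

open scoped Matrix

namespace Ideal

variable {R : Type*} [CommRing R]

theorem span_range_mulVec_le {ι : Type*} [Fintype ι] (A : Matrix ι ι R) (x : ι → R) :
    span (Set.range (A *ᵥ x)) ≤ span (Set.range x) :=
  span_le.mpr <| Set.range_subset_iff.mpr fun _ =>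
    sum_mem _ fun j _ => mul_mem_left _ _ (subset_span ⟨j, rfl⟩)

theorem span_range_mulVec_of_isUnit {ι : Type*} [Fintype ι] [DecidableEq ι]
    {A : Matrix ι ι R} (hA : IsUnit A) (x : ι → R) :
    span (Set.range (A *ᵥ x)) = span (Set.range x) := by
  refine le_antisymm (span_range_mulVec_le A x) ?_
  obtain ⟨B, hBA⟩ := hA.exists_left_inv
  calc span (Set.range x) = span (Set.range (B *ᵥ (A *ᵥ x))) := by
        rw [Matrix.mulVec_mulVec, hBA, Matrix.one_mulVec]
    _ ≤ _ := span_range_mulVec_le B _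

theorem exists_sub_one_mem_and_mul_mem_of_le_sup_sq {I J : Ideal R} (hJ : J.FG)
    (h : J ≤ I ⊔ J ^ 2) : ∃ r, r - 1 ∈ J ∧ ∀ x ∈ J, r * x ∈ I := by
  let N : Submodule R (R ⧸ I) := Submodule.map I.mkQ J
  have hN : N ≤ J • N :=
    calc N ≤ Submodule.map I.mkQ (I ⊔ J • J) := Submodule.map_mono (by rwa [smul_eq_mul, ← sq])
      _ = J • N := by
        rw [Submodule.map_sup, Submodule.map_smul'', Submodule.mkQ_map_self, bot_sup_eq]
  obtain ⟨r, hr, hrN⟩ :=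
    Submodule.exists_sub_one_mem_and_smul_eq_zero_of_fg_of_le_smul J N
      (Submodule.FG.map I.mkQ hJ) hN
  exact ⟨r, hr, fun x hx => (Submodule.Quotient.mk_eq_zero I).mp (hrN _ ⟨x, hx, rfl⟩)⟩

theorem isRadical_of_forall_isMaximal_le_sup_sq [IsNoetherianRing R] {I : Ideal R}
    (h : ∀ m : Ideal R, m.IsMaximal → I ≤ m → m ≤ I ⊔ m ^ 2) : I.IsRadical := by
  intro x hx
  by_contra hxI
  have hcolon : I.colon (span {x}) ≠ ⊤ := fun htop =>
    hxI (by simpa using mem_colon_span_singleton.mp (htop ▸ Submodule.mem_top : (1 : R) ∈ _))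
  obtain ⟨m, hm, hcolon_le⟩ := exists_le_maximal _ hcolon
  have hIm : I ≤ m := fun y hy => hcolon_le (mem_colon_span_singleton.mpr (I.mul_mem_right x hy))
  have hxm : x ∈ m := hm.isPrime.radical_le_iff.mpr hIm hx
  obtain ⟨r, hr1, hrm⟩ :=
    exists_sub_one_mem_and_mul_mem_of_le_sup_sq (IsNoetherian.noetherian m) (h m hm hIm)
  have hr : r ∈ m := hcolon_le (mem_colon_span_singleton.mpr (mul_comm x r ▸ hrm x hxm))
  exact hm.ne_top ((eq_top_iff_one m).mpr (by simpa using sub_mem hr hr1))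

theorem IsRadical.of_map_of_faithfullyFlat {A B : Type*} [CommRing A] [CommRing B]
    [Algebra A B] [Module.FaithfullyFlat A B] {I : Ideal A}
    (h : (I.map (algebraMap A B)).IsRadical) : I.IsRadical := by
  rw [← I.comap_map_eq_self_of_faithfullyFlat (B := B)]
  exact h.comap _

end Ideal

attribute [local instance] MvPolynomial.algebraMvPolynomial in
theorem Module.FaithfullyFlat.mvPolynomial {R S σ : Type u} [CommRing R] [CommRing S]
    [Algebra R S] [Module.FaithfullyFlat R S] :
    Module.FaithfullyFlat (MvPolynomial σ R) (MvPolynomial σ S) := by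
  rw [← RingHom.faithfullyFlat_algebraMap_iff]
  exact RingHom.FaithfullyFlat.isStableUnderBaseChange R S _ _
    (RingHom.faithfullyFlat_algebraMap_iff.mpr inferInstance)

namespace MvPolynomial

variable {R σ : Type*} [CommRing R]

noncomputable def jacobianAt (g : σ → MvPolynomial σ R) (p : σ → R) : Matrix σ σ R :=
  Matrix.of fun j k => eval p (pderiv k (g j))

variable [Fintype σ]

theorem sub_sub_sum_pderiv_mem_ker_eval_sq (p : σ → R) (h : MvPolynomial σ R) :
    h - C (eval p h) - ∑ j, C (eval p (pderiv j h)) * (X j - C (p j)) ∈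
      RingHom.ker (eval p) ^ 2 := by
  classical
  have hX : ∀ j, X j - C (p j) ∈ RingHom.ker (eval p) := fun j => by simp
  induction h using MvPolynomial.induction_on with
  | C a => simp
  | add f g hf hg =>
    convert add_mem hf hg using 1
    simp only [map_add, add_mul, Finset.sum_add_distrib]
    ring
  | mul_X f i hf =>
    set L := ∑ j, C (eval p (pderiv j f)) * (X j - C (p j))
    have hpderiv : ∀ j, eval p (pderiv j (f * X i)) =
        p i * eval p (pderiv j f) + if j = i then eval p f else 0 := fun j => by
      by_cases hji : j = i
      · subst hji; simp [add_comm]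
      · simp [hji, pderiv_X_of_ne (Ne.symm hji)]
    have hL : ∑ j, C (eval p (pderiv j (f * X i))) * (X j - C (p j)) =
        C (p i) * L + C (eval p f) * (X i - C (p i)) := by
      simp only [hpderiv, map_add, map_mul, add_mul, Finset.sum_add_distrib, mul_assoc,
        ← Finset.mul_sum, apply_ite C, map_zero, ite_mul, zero_mul, Finset.sum_ite_eq',
        Finset.mem_univ, if_true, L]
    have hLm : L ∈ RingHom.ker (eval p) :=
      Ideal.sum_mem _ fun j _ => Ideal.mul_mem_left _ _ (hX j)
    rw [hL, show f * X i - C (eval p (f * X i)) - (C (p i) * L + C (eval p f) * (X i - C (p i))) =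
        (f - C (eval p f) - L) * X i + L * (X i - C (p i)) by simp only [map_mul, eval_X]; ring]
    exact add_mem (Ideal.mul_mem_right _ _ hf)
      (sq (RingHom.ker (eval p)) ▸ Ideal.mul_mem_mul hLm (hX i))

theorem ker_eval_le_span_X_sub_C_sup_sq (p : σ → R) :
    RingHom.ker (eval p) ≤
      Ideal.span (Set.range fun j => X j - C (p j)) ⊔ RingHom.ker (eval p) ^ 2 := by
  intro h hh
  have hT := sub_sub_sum_pderiv_mem_ker_eval_sq p h
  rw [RingHom.mem_ker.mp hh, map_zero, sub_zero] at hT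
  have hlin : ∑ j, C (eval p (pderiv j h)) * (X j - C (p j)) ∈
      Ideal.span (Set.range fun j => X j - C (p j)) :=
    Ideal.sum_mem _ fun j _ => Ideal.mul_mem_left _ _ (Ideal.subset_span ⟨j, rfl⟩)
  simpa using Ideal.add_mem _ (Ideal.mem_sup_left hlin) (Ideal.mem_sup_right hT)

theorem ker_eval_le_span_sup_sq_of_isUnit_jacobianAt [DecidableEq σ] {g : σ → MvPolynomial σ R}
    {p : σ → R} (hg : ∀ j, eval p (g j) = 0) (hJ : IsUnit (jacobianAt g p)) :
    RingHom.ker (eval p) ≤ Ideal.span (Set.range g) ⊔ RingHom.ker (eval p) ^ 2 := by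
  let x : σ → MvPolynomial σ R := fun j => X j - C (p j)
  have hA : IsUnit ((jacobianAt g p).map C) := hJ.map (C : R →+* MvPolynomial σ R).mapMatrix
  refine (ker_eval_le_span_X_sub_C_sup_sq p).trans (sup_le ?_ le_sup_right)
  rw [← Ideal.span_range_mulVec_of_isUnit hA x, Ideal.span_le]
  rintro _ ⟨j, rfl⟩
  have hT := sub_sub_sum_pderiv_mem_ker_eval_sq p (g j)
  rw [hg j, map_zero, sub_zero] at hT
  have hgj : g j ∈ Ideal.span (Set.range g) ⊔ RingHom.ker (eval p) ^ 2 :=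
    Ideal.mem_sup_left (Ideal.subset_span ⟨j, rfl⟩)
  simpa [Matrix.mulVec, dotProduct, jacobianAt, x] using
    Ideal.sub_mem _ hgj (Ideal.mem_sup_right hT)

theorem isRadical_span_of_isUnit_jacobianAt {K : Type*} [Field K] [IsAlgClosed K] [DecidableEq σ]
    {g : σ → MvPolynomial σ K} (hg : ∀ p, (∀ j, eval p (g j) = 0) → IsUnit (jacobianAt g p)) :
    (Ideal.span (Set.range g)).IsRadical := by
  refine Ideal.isRadical_of_forall_isMaximal_le_sup_sq fun m hm hle => ?_
  obtain ⟨p, rfl⟩ := isMaximal_iff_eq_vanishingIdeal_singleton.mp hm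
  have hker : vanishingIdeal K {p} = RingHom.ker (eval p) := by
    ext h
    simp
  have hzero : ∀ j, eval p (g j) = 0 := fun j => by
    rw [← RingHom.mem_ker, ← hker]
    exact hle (Ideal.subset_span ⟨j, rfl⟩)
  rw [hker]
  exact ker_eval_le_span_sup_sq_of_isUnit_jacobianAt hzero (hg p hzero)

end MvPolynomial

theorem jacobianAt_pderiv_complexify {n : ℕ} (f : MvPolynomial (Fin n) ℝ) (p : Fin n → ℂ) :
    jacobianAt (fun i => pderiv i (complexify f)) p = (complexHessian f p)ᵀ :=
  rfl

theorem map_span_range_pderiv {n : ℕ} (f : MvPolynomial (Fin n) ℝ) :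
    letI := algebraMvPolynomial (σ := Fin n) (R := ℝ) (S := ℂ)
    (Ideal.span (Set.range fun i => pderiv i f)).map
        (algebraMap (MvPolynomial (Fin n) ℝ) (MvPolynomial (Fin n) ℂ)) =
      Ideal.span (Set.range fun i => pderiv i (complexify f)) := by
  rw [Ideal.map_span, ← Set.range_comp]
  congr 2
  funext i
  exact (pderiv_map (φ := algebraMap ℝ ℂ)).symm

/-- The gradient ideal of a Morse polynomial `f ∈ ℝ[x₁,…,xₙ]` is radical. -/
theorem gradient_ideal_isRadical_of_isMorse {n : ℕ} (f : MvPolynomial (Fin n) ℝ)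
    (hf : IsMorse f) :
    (Ideal.span (Set.range fun i => pderiv i f)).IsRadical := by
  let _ := algebraMvPolynomial (σ := Fin n) (R := ℝ) (S := ℂ)
  have := Module.FaithfullyFlat.mvPolynomial (σ := Fin n) (R := ℝ) (S := ℂ)
  refine Ideal.IsRadical.of_map_of_faithfullyFlat (B := MvPolynomial (Fin n) ℂ) ?_
  rw [map_span_range_pderiv]
  refine isRadical_span_of_isUnit_jacobianAt fun p hp => ?_
  rw [jacobianAt_pderiv_complexify, Matrix.isUnit_iff_isUnit_det, Matrix.det_transpose]
  exact (hf.1 p hp).isUnit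
end

section
/- Let f be a Morse polynomial in ℝ[x₁,…,xₙ] and let fℂ ∈ ℂ[x₁,…,xₙ] be f viewed as a complex polynomial. Then the gradient ideal ⟨∂fℂ/∂x₁, …, ∂fℂ/∂xₙ⟩ of ℂ[x₁,…,xₙ] is a radical ideal. -/
/-!
The quotient `ℂ[x] ⧸ ⟨∂f/∂x₁, …, ∂f/∂xₙ⟩` is presented by `n` equations in `n` variables whose
Jacobian matrix is the Hessian of `f`. Non-degeneracy says the Hessian determinant has no common
zero with the gradient ideal, so by the Nullstellensatz it is a unit in the quotient. The
presentation is then submersive of relative dimension zero, i.e. the quotient is étale over `ℂ`,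
and an étale (indeed unramified) algebra over a field is reduced.
-/

open MvPolynomial

namespace MvPolynomial

variable {R σ : Type*} [CommRing R]

noncomputable def jacobianMatrix (v : σ → MvPolynomial σ R) : Matrix σ σ (MvPolynomial σ R) :=
  Matrix.of fun i j => pderiv i (v j)

theorem isUnit_quotient_mk_of_forall_eval_ne_zero {k : Type*} [Field k] [IsAlgClosed k]
    [Finite σ] {I : Ideal (MvPolynomial σ k)} {g : MvPolynomial σ k}
    (hg : ∀ x ∈ zeroLocus k I, eval x g ≠ 0) : IsUnit (Ideal.Quotient.mk I g) := by
  by_contra hunit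
  obtain ⟨M, hM, hgM⟩ := exists_max_ideal_of_mem_nonunits hunit
  have hM' : (M.comap (Ideal.Quotient.mk I)).IsMaximal :=
    Ideal.comap_isMaximal_of_surjective _ Ideal.Quotient.mk_surjective
  obtain ⟨x, hx⟩ := eq_vanishingIdeal_singleton_of_isMaximal k hM'
  have hI : I ≤ vanishingIdeal k {x} := fun p hp => by
    rw [← hx, Ideal.mem_comap, Ideal.Quotient.eq_zero_iff_mem.mpr hp]
    exact M.zero_mem
  refine hg x (fun p hp => ?_) ?_
  · simpa using hI hp
  · have hgx : g ∈ vanishingIdeal k {x} := hx ▸ hgM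
    simpa using hgx

theorem etale_quotient_of_isUnit_det_jacobianMatrix [Fintype σ] [DecidableEq σ]
    (v : σ → MvPolynomial σ R)
    (hv : IsUnit (Ideal.Quotient.mk (Ideal.span (Set.range v)) (jacobianMatrix v).det)) :
    Algebra.Etale R (MvPolynomial σ R ⧸ Ideal.span (Set.range v)) := by
  let P := Algebra.PreSubmersivePresentation.naive (v := v) id Function.injective_id
  have hJ : P.jacobiMatrix = jacobianMatrix v := by
    ext i j
    simp [P, jacobianMatrix]
  have hP : IsUnit P.jacobian := by
    rwa [P.jacobian_eq_jacobiMatrix_det, hJ]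
  have := (Algebra.SubmersivePresentation.mk P hP).isStandardSmoothOfRelativeDimension
    (n := 0) (by simp [Algebra.Presentation.dimension])
  infer_instance

theorem isRadical_span_of_eval_det_jacobianMatrix_ne_zero {k : Type*} [Field k] [IsAlgClosed k]
    [Fintype σ] [DecidableEq σ] (v : σ → MvPolynomial σ k)
    (hv : ∀ x ∈ zeroLocus k (Ideal.span (Set.range v)), eval x (jacobianMatrix v).det ≠ 0) :
    (Ideal.span (Set.range v)).IsRadical := by
  have := etale_quotient_of_isUnit_det_jacobianMatrix v
    (isUnit_quotient_mk_of_forall_eval_ne_zero hv)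
  rw [Ideal.isRadical_iff_quotient_reduced]
  exact Algebra.FormallyUnramified.isReduced_of_field k _

end MvPolynomial

theorem isComplexCriticalPoint_of_mem_zeroLocus {n : ℕ} {f : MvPolynomial (Fin n) ℝ}
    {p : Fin n → ℂ}
    (hp : p ∈ zeroLocus ℂ (Ideal.span (Set.range fun i => pderiv i (complexify f)))) :
    IsComplexCriticalPoint f p := by
  rw [zeroLocus_span] at hp
  intro i
  simpa using hp _ ⟨i, rfl⟩

theorem det_complexHessian_eq_eval {n : ℕ} (f : MvPolynomial (Fin n) ℝ) (p : Fin n → ℂ) :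
    (complexHessian f p).det =
      eval p (jacobianMatrix fun i => pderiv i (complexify f)).det := by
  rw [RingHom.map_det]
  rfl

/-- The gradient ideal in `ℂ[x₁,…,xₙ]` of the complexification of a Morse polynomial
`f ∈ ℝ[x₁,…,xₙ]` is radical. -/
theorem complex_gradient_ideal_isRadical_of_isMorse {n : ℕ} (f : MvPolynomial (Fin n) ℝ)
    (hf : IsMorse f) :
    (Ideal.span (Set.range fun i => pderiv i (complexify f))).IsRadical :=
  isRadical_span_of_eval_det_jacobianMatrix_ne_zero _ fun p hp => by
    rw [← det_complexHessian_eq_eval]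
    exact hf.1 p (isComplexCriticalPoint_of_mem_zeroLocus hp)
end

section
/- In the polynomial ring ℝ[x,y], with f(x,y) = x² + (xy − 1)², the identity f − 1 = (1/2)·x·(1 − y²)·∂f/∂x + (1/2)·y·(1 + y²)·∂f/∂y holds; in particular f − 1 belongs to the gradient ideal ⟨∂f/∂x, ∂f/∂y⟩ of ℝ[x,y]. -/
open MvPolynomial

section

variable {R : Type*} [CommRing R]

lemma pderiv_zero_sq_add_mul_sub_one_sq :
    pderiv 0 (X 0 ^ 2 + (X 0 * X 1 - 1) ^ 2 : MvPolynomial (Fin 2) R) =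
      2 * X 0 + 2 * X 1 * (X 0 * X 1 - 1) := by
  simp only [map_add, map_sub, Derivation.leibniz_pow, Derivation.leibniz,
    Derivation.map_one_eq_zero, pderiv_X_self, pderiv_X_of_ne one_ne_zero, smul_eq_mul,
    nsmul_eq_mul]
  ring

lemma pderiv_one_sq_add_mul_sub_one_sq :
    pderiv 1 (X 0 ^ 2 + (X 0 * X 1 - 1) ^ 2 : MvPolynomial (Fin 2) R) =
      2 * X 0 * (X 0 * X 1 - 1) := by
  simp only [map_add, map_sub, Derivation.leibniz_pow, Derivation.leibniz,
    Derivation.map_one_eq_zero, pderiv_X_self, pderiv_X_of_ne zero_ne_one, smul_eq_mul,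
    nsmul_eq_mul]
  ring

end

lemma sq_add_mul_sub_one_sq_sub_one_eq {K : Type*} [Field K] (h2 : (2 : K) ≠ 0) :
    (X 0 ^ 2 + (X 0 * X 1 - 1) ^ 2 : MvPolynomial (Fin 2) K) - 1 =
      C (1 / 2 : K) * X 0 * (1 - X 1 ^ 2) *
          pderiv 0 (X 0 ^ 2 + (X 0 * X 1 - 1) ^ 2 : MvPolynomial (Fin 2) K) +
        C (1 / 2 : K) * X 1 * (1 + X 1 ^ 2) *
          pderiv 1 (X 0 ^ 2 + (X 0 * X 1 - 1) ^ 2 : MvPolynomial (Fin 2) K) := by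
  have half_mul_two : (C (1 / 2 : K) : MvPolynomial (Fin 2) K) * 2 = 1 := by
    rw [← map_ofNat C 2, ← map_mul, one_div_mul_cancel h2, map_one]
  rw [pderiv_zero_sq_add_mul_sub_one_sq, pderiv_one_sq_add_mul_sub_one_sq]
  linear_combination (1 - (X 0 ^ 2 + (X 0 * X 1 - 1) ^ 2 : MvPolynomial (Fin 2) K)) * half_mul_two

/-- For `f(x,y) = x² + (xy − 1)² ∈ ℝ[x,y]`, the identity
`f − 1 = (1/2)·x·(1 − y²)·∂f/∂x + (1/2)·y·(1 + y²)·∂f/∂y` holds; in particular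
`f − 1` belongs to the gradient ideal `⟨∂f/∂x, ∂f/∂y⟩`. -/
theorem sub_one_mem_gradient_ideal :
    (X 0 ^ 2 + (X 0 * X 1 - 1) ^ 2 : MvPolynomial (Fin 2) ℝ) - 1 =
        C (1 / 2 : ℝ) * X 0 * (1 - X 1 ^ 2) *
            pderiv 0 (X 0 ^ 2 + (X 0 * X 1 - 1) ^ 2 : MvPolynomial (Fin 2) ℝ) +
          C (1 / 2 : ℝ) * X 1 * (1 + X 1 ^ 2) *
            pderiv 1 (X 0 ^ 2 + (X 0 * X 1 - 1) ^ 2 : MvPolynomial (Fin 2) ℝ) ∧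
    (X 0 ^ 2 + (X 0 * X 1 - 1) ^ 2 : MvPolynomial (Fin 2) ℝ) - 1 ∈
      Ideal.span {pderiv 0 (X 0 ^ 2 + (X 0 * X 1 - 1) ^ 2 : MvPolynomial (Fin 2) ℝ),
        pderiv 1 (X 0 ^ 2 + (X 0 * X 1 - 1) ^ 2 : MvPolynomial (Fin 2) ℝ)} := by
  have identity := sq_add_mul_sub_one_sq_sub_one_eq (two_ne_zero' ℝ)
  exact ⟨identity, Ideal.mem_span_pair.2 ⟨_, _, identity.symm⟩⟩
end
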